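/- arXiv:2601.11648 — 3 statements merged into one kernel-verified Lean document; each statement's English description precedes it below -/
import Mathlib

section
/- For every integer m > 1, the level set of the first-coordinate projection at value 0 on the zero set of e_m is exactly the set of points (0, kπ, 0) for k ∈ ℤ; that is, {(x₁, x₂, y) : e_m(x₁, x₂, y) = 0 and x₁ = 0} = {(0, kπ, 0) : k ∈ ℤ}. In particular this set is infinite and is a discrete, closed subset of e_m⁻¹(0). -/
noncomputable def c10 (x : ℝ) : ℝ := (Real.sin x) ^ 2 / (2 * (x ^ 2 + 1))

noncomputable def c20 (x : ℝ) : ℝ := 1 / (x ^ 2 + 1)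

noncomputable def e (m : ℕ) : ℝ × ℝ × (Fin (m - 1) → ℝ) → ℝ :=
  fun p => (p.1 - c10 p.2.1) * (c20 p.2.1 - p.1) - ∑ j, (p.2.2 j) ^ 2

/-!
On the hyperplane `x₁ = 0`, `e_m` is minus the sum of the nonnegative terms `c₁₀(x₂) c₂₀(x₂)` and
`∑ yⱼ²`, so it vanishes exactly when `sin x₂ = 0` and `y = 0`. The resulting set is the image of `ℤ`
under the closed embedding `k ↦ (0, kπ, 0)`, hence infinite, closed and discrete.
-/

open Real Topology

lemma c10_nonneg (x : ℝ) : 0 ≤ c10 x := by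
  unfold c10; positivity

lemma c20_pos (x : ℝ) : 0 < c20 x := by
  unfold c20; positivity

lemma c10_eq_zero_iff {x : ℝ} : c10 x = 0 ↔ sin x = 0 := by
  have : 2 * (x ^ 2 + 1) ≠ 0 := by positivity
  simp [c10, this]

lemma e_fst_zero (m : ℕ) (x : ℝ) (y : Fin (m - 1) → ℝ) :
    e m (0, x, y) = -(c10 x * c20 x + ∑ j, y j ^ 2) := by
  simp only [e]; ring

lemma e_fst_zero_eq_zero_iff {m : ℕ} {x : ℝ} {y : Fin (m - 1) → ℝ} :
    e m (0, x, y) = 0 ↔ sin x = 0 ∧ y = 0 := by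
  have hc : 0 ≤ c10 x * c20 x := mul_nonneg (c10_nonneg x) (c20_pos x).le
  have hy : 0 ≤ ∑ j, y j ^ 2 := Finset.sum_nonneg fun j _ => sq_nonneg (y j)
  rw [e_fst_zero, neg_eq_zero, add_eq_zero_iff_of_nonneg hc hy, mul_eq_zero, c10_eq_zero_iff,
    Finset.sum_eq_zero_iff_of_nonneg fun j _ => sq_nonneg (y j)]
  simp [(c20_pos x).ne', funext_iff]

lemma setOf_e_eq_zero_and_fst_eq_zero (m : ℕ) :
    {p : ℝ × ℝ × (Fin (m - 1) → ℝ) | e m p = 0 ∧ p.1 = 0} =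
      Set.range fun k : ℤ => ((0 : ℝ), (k : ℝ) * π, (0 : Fin (m - 1) → ℝ)) := by
  ext ⟨x₁, x₂, y⟩
  simp only [Set.mem_ofPred_eq, Set.mem_range, Prod.mk.injEq]
  constructor
  · rintro ⟨he, rfl⟩
    obtain ⟨hsin, rfl⟩ := e_fst_zero_eq_zero_iff.1 he
    obtain ⟨k, rfl⟩ := sin_eq_zero_iff.1 hsin
    exact ⟨k, rfl, rfl, rfl⟩
  · rintro ⟨k, rfl, rfl, rfl⟩
    exact ⟨e_fst_zero_eq_zero_iff.2 ⟨sin_int_mul_pi k, rfl⟩, rfl⟩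

lemma isClosedEmbedding_prodMk_mid {X Y Z : Type*} [TopologicalSpace X] [TopologicalSpace Y]
    [TopologicalSpace Z] [T2Space X] [T2Space Y] [T2Space Z] (x : X) (z : Z) :
    IsClosedEmbedding fun y : Y => (x, y, z) :=
  Function.LeftInverse.isClosedEmbedding (f := fun p : X × Y × Z => p.2.1) (fun _ => rfl)
    (by fun_prop) (by fun_prop)

lemma isClosedEmbedding_intCast_mul {c : ℝ} (hc : c ≠ 0) :
    IsClosedEmbedding fun k : ℤ => (k : ℝ) * c :=
  (Homeomorph.mulRight₀ c hc).isClosedEmbedding.comp Int.isClosedEmbedding_coe_real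

theorem stmt6_general (m : ℕ) :
    {p : ℝ × ℝ × (Fin (m - 1) → ℝ) | e m p = 0 ∧ p.1 = 0} =
      {p : ℝ × ℝ × (Fin (m - 1) → ℝ) |
        ∃ k : ℤ, p = (0, (k : ℝ) * Real.pi, 0)} ∧
    {p : ℝ × ℝ × (Fin (m - 1) → ℝ) | e m p = 0 ∧ p.1 = 0}.Infinite ∧
    IsClosed {p : ℝ × ℝ × (Fin (m - 1) → ℝ) | e m p = 0 ∧ p.1 = 0} ∧
    DiscreteTopology
      {p : ℝ × ℝ × (Fin (m - 1) → ℝ) | e m p = 0 ∧ p.1 = 0} := by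
  have hf : IsClosedEmbedding fun k : ℤ => ((0 : ℝ), (k : ℝ) * π, (0 : Fin (m - 1) → ℝ)) :=
    (isClosedEmbedding_prodMk_mid _ _).comp (isClosedEmbedding_intCast_mul pi_ne_zero)
  rw [setOf_e_eq_zero_and_fst_eq_zero]
  refine ⟨by simp only [Set.range, eq_comm], Set.infinite_range_of_injective hf.injective,
    hf.isClosed_range, isDiscrete_iff_discreteTopology.mp hf.isInducing.isDiscrete_range⟩

theorem stmt6 (m : ℕ) (hm : 1 < m) :
    {p : ℝ × ℝ × (Fin (m - 1) → ℝ) | e m p = 0 ∧ p.1 = 0} =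
      {p : ℝ × ℝ × (Fin (m - 1) → ℝ) |
        ∃ k : ℤ, p = (0, (k : ℝ) * Real.pi, 0)} ∧
    {p : ℝ × ℝ × (Fin (m - 1) → ℝ) | e m p = 0 ∧ p.1 = 0}.Infinite ∧
    IsClosed {p : ℝ × ℝ × (Fin (m - 1) → ℝ) | e m p = 0 ∧ p.1 = 0} ∧
    DiscreteTopology
      {p : ℝ × ℝ × (Fin (m - 1) → ℝ) | e m p = 0 ∧ p.1 = 0} :=
  stmt6_general m
end

section
/- For every integer m > 1 and every point p = (x₁, x₂, y) with e_m(p) = 0, the gradient of e_m at p is a scalar multiple of the first standard coordinate vector (equivalently, all partial derivatives of e_m at p in the x₂-direction and all y-directions vanish) if and only if either (y = 0, x₁ = c₁₀(x₂) and deriv c₁₀ (x₂) = 0), or p = (1, 0, 0). (These are precisely the critical points of the restriction of the first-coordinate projection to the hypersurface e_m⁻¹(0).) -/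
section TubeFun

variable {ι : Type*} [Fintype ι]

def tubeFun (f g : ℝ → ℝ) (p : ℝ × ℝ × (ι → ℝ)) : ℝ :=
  (p.1 - f p.2.1) * (g p.2.1 - p.1) - ∑ j, p.2.2 j ^ 2

variable {f g : ℝ → ℝ} {x₁ x₂ : ℝ} {y : ι → ℝ}

open ContinuousLinearMap in
theorem fderiv_tubeFun_apply (hf : DifferentiableAt ℝ f x₂) (hg : DifferentiableAt ℝ g x₂)
    (v : ℝ × ℝ × (ι → ℝ)) :
    fderiv ℝ (tubeFun f g) (x₁, x₂, y) v =
      (v.1 - deriv f x₂ * v.2.1) * (g x₂ - x₁) + (x₁ - f x₂) * (deriv g x₂ * v.2.1 - v.1)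
        - ∑ j, 2 * y j * v.2.2 j := by
  set p : ℝ × ℝ × (ι → ℝ) := (x₁, x₂, y)
  have h₁ : HasFDerivAt (fun q : ℝ × ℝ × (ι → ℝ) => q.1) (fst ℝ ℝ (ℝ × (ι → ℝ))) p :=
    hasFDerivAt_fst
  have h₂ : HasFDerivAt (fun q : ℝ × ℝ × (ι → ℝ) => q.2.1)
      ((fst ℝ ℝ (ι → ℝ)).comp (snd ℝ ℝ (ℝ × (ι → ℝ)))) p :=
    hasFDerivAt_fst.comp p hasFDerivAt_snd
  have hy : ∀ j, HasFDerivAt (fun q : ℝ × ℝ × (ι → ℝ) => q.2.2 j ^ 2)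
      ((2 * y j) • (proj j).comp ((snd ℝ ℝ (ι → ℝ)).comp (snd ℝ ℝ (ℝ × (ι → ℝ))))) p := by
    intro j
    have hsq : HasDerivAt (fun t : ℝ => t ^ 2) (2 * y j) (y j) := by
      simpa using hasDerivAt_pow 2 (y j)
    exact hsq.comp_hasFDerivAt p
      ((proj j).comp ((snd ℝ ℝ (ι → ℝ)).comp (snd ℝ ℝ (ℝ × (ι → ℝ))))).hasFDerivAt
  have H : HasFDerivAt (tubeFun f g) _ p := ((h₁.sub (hf.hasDerivAt.comp_hasFDerivAt p h₂)).mul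
    ((hg.hasDerivAt.comp_hasFDerivAt p h₂).sub h₁)).sub
    (HasFDerivAt.fun_sum fun j (_ : j ∈ Finset.univ) => hy j)
  rw [H.fderiv]
  simp only [Pi.sub_apply, Function.comp_apply, sub_apply, add_apply, smul_apply, comp_apply,
    coe_snd', coe_fst', smul_eq_mul, sum_apply, proj_apply, p]
  ring

theorem fderiv_tubeFun_apply_zero_one_zero (hf : DifferentiableAt ℝ f x₂)
    (hg : DifferentiableAt ℝ g x₂) :
    fderiv ℝ (tubeFun f g) (x₁, x₂, y) (0, 1, 0) =
      deriv g x₂ * (x₁ - f x₂) - deriv f x₂ * (g x₂ - x₁) := by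
  rw [fderiv_tubeFun_apply hf hg]
  simp only [mul_zero, sub_zero, Pi.zero_apply, Finset.sum_const_zero]
  ring

theorem fderiv_tubeFun_apply_single [DecidableEq ι] (hf : DifferentiableAt ℝ f x₂)
    (hg : DifferentiableAt ℝ g x₂) (j : ι) :
    fderiv ℝ (tubeFun f g) (x₁, x₂, y) (0, 0, Pi.single j 1) = -(2 * y j) := by
  rw [fderiv_tubeFun_apply hf hg]
  simp [Pi.single_apply]

theorem fderiv_tubeFun_partials_eq_zero_iff [DecidableEq ι] (hf : DifferentiableAt ℝ f x₂)
    (hg : DifferentiableAt ℝ g x₂) (hfg : f x₂ ≠ g x₂) (hp : tubeFun f g (x₁, x₂, y) = 0) :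
    (fderiv ℝ (tubeFun f g) (x₁, x₂, y) (0, 1, 0) = 0 ∧
      ∀ j, fderiv ℝ (tubeFun f g) (x₁, x₂, y) (0, 0, Pi.single j 1) = 0) ↔
    y = 0 ∧ (x₁ = f x₂ ∧ deriv f x₂ = 0 ∨ x₁ = g x₂ ∧ deriv g x₂ = 0) := by
  have hgf : g x₂ - f x₂ ≠ 0 := sub_ne_zero.2 hfg.symm
  have hy : (∀ j, -(2 * y j) = 0) ↔ y = 0 := by simp [funext_iff]
  simp only [fderiv_tubeFun_apply_zero_one_zero hf hg, fderiv_tubeFun_apply_single hf hg, hy]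
  rw [and_comm]
  refine and_congr_right fun hy₀ => ?_
  subst hy₀
  have hx₁ : x₁ = f x₂ ∨ x₁ = g x₂ := by
    simpa [tubeFun, sub_eq_zero, eq_comm] using hp
  rcases hx₁ with rfl | rfl
  · simp [hgf, hfg]
  · simp [hgf, hfg.symm]

end TubeFun

theorem differentiable_c10 : Differentiable ℝ c10 := fun x =>
  ((Real.differentiable_sin x).pow 2).div (by fun_prop) (by positivity)

theorem hasDerivAt_c20 (x : ℝ) : HasDerivAt c20 (-(2 * x) / (x ^ 2 + 1) ^ 2) x := by
  have h : HasDerivAt (fun x : ℝ => x ^ 2 + 1) (2 * x) x := by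
    simpa using (hasDerivAt_pow 2 x).add_const 1
  unfold c20
  simpa only [one_div] using h.fun_inv (by positivity)

theorem deriv_c20_eq_zero_iff {x : ℝ} : deriv c20 x = 0 ↔ x = 0 := by
  rw [(hasDerivAt_c20 x).deriv]
  have : (x ^ 2 + 1) ^ 2 ≠ 0 := by positivity
  simp [this]

theorem c10_lt_c20 (x : ℝ) : c10 x < c20 x := by
  have hsin : Real.sin x ^ 2 ≤ 1 := Real.sin_sq_le_one x
  unfold c10 c20
  rw [div_lt_div_iff₀ (by positivity) (by positivity)]
  nlinarith [sq_nonneg x]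

theorem e_eq_tubeFun (m : ℕ) : e m = tubeFun c10 c20 := rfl

theorem stmt7_general (m : ℕ) (p : ℝ × ℝ × (Fin (m - 1) → ℝ))
    (hp : e m p = 0) :
    (fderiv ℝ (e m) p ((0 : ℝ), (1 : ℝ), (0 : Fin (m - 1) → ℝ)) = 0 ∧
      ∀ j : Fin (m - 1),
        fderiv ℝ (e m) p ((0 : ℝ), (0 : ℝ), Pi.single j (1 : ℝ)) = 0) ↔
    ((p.2.2 = 0 ∧ p.1 = c10 p.2.1 ∧ deriv c10 p.2.1 = 0) ∨
      p = ((1 : ℝ), (0 : ℝ), (0 : Fin (m - 1) → ℝ))) := by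
  obtain ⟨x₁, x₂, y⟩ := p
  rw [e_eq_tubeFun] at hp ⊢
  rw [fderiv_tubeFun_partials_eq_zero_iff (differentiable_c10 x₂)
    (hasDerivAt_c20 x₂).differentiableAt (c10_lt_c20 x₂).ne hp, deriv_c20_eq_zero_iff]
  have hc20 : x₁ = c20 x₂ ∧ x₂ = 0 ↔ x₁ = 1 ∧ x₂ = 0 := by
    constructor <;> rintro ⟨h, rfl⟩ <;> simp_all [c20]
  simp only [hc20, Prod.mk.injEq]
  tauto

theorem stmt7 (m : ℕ) (hm : 1 < m) (p : ℝ × ℝ × (Fin (m - 1) → ℝ))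
    (hp : e m p = 0) :
    (fderiv ℝ (e m) p ((0 : ℝ), (1 : ℝ), (0 : Fin (m - 1) → ℝ)) = 0 ∧
      ∀ j : Fin (m - 1),
        fderiv ℝ (e m) p ((0 : ℝ), (0 : ℝ), Pi.single j (1 : ℝ)) = 0) ↔
    ((p.2.2 = 0 ∧ p.1 = c10 p.2.1 ∧ deriv c10 p.2.1 = 0) ∨
      p = ((1 : ℝ), (0 : ℝ), (0 : Fin (m - 1) → ℝ))) :=
  stmt7_general m p hp
end

section
/- For every natural number n, the quotient (iteratedDeriv n c₀)(x) / x tends to 0 as x tends to 0 through nonzero values; that is, the n-th derivative of c₀ vanishes to order higher than 1 at 0. -/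
noncomputable def c0 (x : ℝ) : ℝ :=
  if x = 0 then 0 else Real.exp (-1 / x ^ 2) * x * (Real.sin (1 / x)) ^ 2

/-! Away from `0`, every derivative of `c0` has the form `exp (-1 / x ^ 2) * h x` with `h` a
polynomial in `x`, `x⁻¹`, `sin x⁻¹` and `cos x⁻¹`, since that class is closed under
differentiation. Dividing by `x` stays in the class, and near `0` such an `h` is `O((x ^ 2)⁻¹ ^ m)`
for some `m`, which `exp (-1 / x ^ 2) = exp (-(x ^ 2)⁻¹)` beats. -/

open Real Filter Asymptotics Topology

lemma tendsto_inv_sq_nhdsNE_zero : Tendsto (fun x : ℝ => (x ^ 2)⁻¹) (𝓝[≠] 0) atTop := by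
  convert (tendsto_pow_atTop two_ne_zero).comp (tendsto_norm_inv_nhdsNE_zero_atTop (α := ℝ)) using 1
  funext x
  simp [inv_pow]

lemma isBigO_pow_pow_atTop_of_le {a b : ℕ} (hab : a ≤ b) :
    (fun u : ℝ => u ^ a) =O[atTop] fun u => u ^ b := by
  refine IsBigO.of_bound' ?_
  filter_upwards [eventually_ge_atTop 1] with u hu
  simp only [norm_pow, Real.norm_of_nonneg (zero_le_one.trans hu)]
  exact pow_le_pow_right₀ hu hab

inductive InvTrigPoly : (ℝ → ℝ) → Prop
  | const (c : ℝ) : InvTrigPoly fun _ => c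
  | id : InvTrigPoly fun x => x
  | inv : InvTrigPoly fun x => x⁻¹
  | sin : InvTrigPoly fun x => sin x⁻¹
  | cos : InvTrigPoly fun x => cos x⁻¹
  | add {f g} : InvTrigPoly f → InvTrigPoly g → InvTrigPoly fun x => f x + g x
  | mul {f g} : InvTrigPoly f → InvTrigPoly g → InvTrigPoly fun x => f x * g x

namespace InvTrigPoly

lemma neg_inv_sq : InvTrigPoly fun x => -(x ^ 2)⁻¹ := by
  convert (const (-1)).mul (inv.mul inv) using 1
  funext x
  ring

lemma exists_hasDerivAt {f : ℝ → ℝ} (hf : InvTrigPoly f) :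
    ∃ f', InvTrigPoly f' ∧ ∀ x ≠ 0, HasDerivAt f (f' x) x := by
  induction hf with
  | const c => exact ⟨_, const 0, fun x _ => hasDerivAt_const x c⟩
  | id => exact ⟨_, const 1, fun x _ => hasDerivAt_id x⟩
  | inv => exact ⟨_, neg_inv_sq, fun x hx => hasDerivAt_inv hx⟩
  | sin => exact ⟨_, cos.mul neg_inv_sq, fun x hx => (hasDerivAt_sin _).comp x (hasDerivAt_inv hx)⟩
  | cos =>
    refine ⟨_, sin.mul (neg_inv_sq.mul (const (-1))), fun x hx => ?_⟩
    exact ((hasDerivAt_cos _).comp x (hasDerivAt_inv hx)).congr_deriv (by ring)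
  | add _ _ ihf ihg =>
    obtain ⟨f', hf', hfd⟩ := ihf
    obtain ⟨g', hg', hgd⟩ := ihg
    exact ⟨_, hf'.add hg', fun x hx => (hfd x hx).add (hgd x hx)⟩
  | mul hf hg ihf ihg =>
    obtain ⟨f', hf', hfd⟩ := ihf
    obtain ⟨g', hg', hgd⟩ := ihg
    exact ⟨_, (hf'.mul hg).add (hf.mul hg'), fun x hx => (hfd x hx).mul (hgd x hx)⟩

lemma exists_hasDerivAt_exp_mul {p f : ℝ → ℝ} (hp : InvTrigPoly p) (hf : InvTrigPoly f) :
    ∃ g, InvTrigPoly g ∧ ∀ x ≠ 0, HasDerivAt (fun y => exp (p y) * f y) (exp (p x) * g x) x := by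
  obtain ⟨p', hp', hpd⟩ := hp.exists_hasDerivAt
  obtain ⟨f', hf', hfd⟩ := hf.exists_hasDerivAt
  refine ⟨_, (hp'.mul hf).add hf', fun x hx => ?_⟩
  exact (((hpd x hx).exp).mul (hfd x hx)).congr_deriv (by ring)

lemma exists_isBigO {f : ℝ → ℝ} (hf : InvTrigPoly f) :
    ∃ m : ℕ, f =O[𝓝[≠] 0] fun x => (x ^ 2)⁻¹ ^ m := by
  have hid : (fun x : ℝ => x) =O[𝓝[≠] 0] fun _ => (1 : ℝ) :=
    (continuous_id.tendsto 0).mono_left nhdsWithin_le_nhds |>.isBigO_one ℝ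
  induction hf with
  | const c => exact ⟨0, by simpa using isBigO_const_one ℝ c _⟩
  | id => exact ⟨0, by simpa using hid⟩
  | inv =>
    refine ⟨1, (hid.mul (isBigO_refl (fun x : ℝ => (x ^ 2)⁻¹) _)).congr (fun x => ?_) (fun x => ?_)⟩
    · rcases eq_or_ne x 0 with rfl | hx
      · simp
      · field_simp
    · simp
  | sin => exact ⟨0, isBigO_of_le' (c := 1) _ fun x => by simpa using abs_sin_le_one _⟩
  | cos => exact ⟨0, isBigO_of_le' (c := 1) _ fun x => by simpa using abs_cos_le_one _⟩
  | add _ _ ihf ihg =>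
    obtain ⟨a, ha⟩ := ihf
    obtain ⟨b, hb⟩ := ihg
    have bump {k : ℕ} (hk : k ≤ max a b) :=
      (isBigO_pow_pow_atTop_of_le hk).comp_tendsto tendsto_inv_sq_nhdsNE_zero
    exact ⟨max a b, (ha.trans (bump (le_max_left a b))).add (hb.trans (bump (le_max_right a b)))⟩
  | mul _ _ ihf ihg =>
    obtain ⟨a, ha⟩ := ihf
    obtain ⟨b, hb⟩ := ihg
    exact ⟨a + b, by simpa only [pow_add] using ha.mul hb⟩

lemma tendsto_exp_neg_inv_sq_mul {f : ℝ → ℝ} (hf : InvTrigPoly f) :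
    Tendsto (fun x => exp (-1 / x ^ 2) * f x) (𝓝[≠] 0) (𝓝 0) := by
  obtain ⟨m, hm⟩ := hf.exists_isBigO
  refine ((isBigO_refl (fun x : ℝ => exp (-1 / x ^ 2)) _).mul hm).trans_tendsto ?_
  have := (tendsto_pow_mul_exp_neg_atTop_nhds_zero m).comp tendsto_inv_sq_nhdsNE_zero
  convert this using 1
  funext x
  simp [neg_div, mul_comm]

end InvTrigPoly

lemma exists_iteratedDeriv_c0_eq (n : ℕ) :
    ∃ h, InvTrigPoly h ∧ ∀ x ≠ 0, iteratedDeriv n c0 x = exp (-1 / x ^ 2) * h x := by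
  induction n with
  | zero =>
    refine ⟨_, InvTrigPoly.id.mul (InvTrigPoly.sin.mul InvTrigPoly.sin), fun x hx => ?_⟩
    simp only [iteratedDeriv_zero, c0, if_neg hx, one_div]
    ring
  | succ n ih =>
    obtain ⟨h, hh, heq⟩ := ih
    have hp : InvTrigPoly fun x : ℝ => -1 / x ^ 2 := by
      simpa only [neg_div, one_div] using InvTrigPoly.neg_inv_sq
    obtain ⟨g, hg, hgd⟩ := hp.exists_hasDerivAt_exp_mul hh
    refine ⟨g, hg, fun x hx => ?_⟩
    have hev : iteratedDeriv n c0 =ᶠ[𝓝 x] fun y => exp (-1 / y ^ 2) * h y :=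
      eventually_ne_nhds hx |>.mono heq
    rw [iteratedDeriv_succ, hev.deriv_eq, (hgd x hx).deriv]

theorem stmt12 (n : ℕ) :
    Filter.Tendsto (fun x : ℝ => iteratedDeriv n c0 x / x)
      (nhdsWithin 0 {x : ℝ | x ≠ 0}) (nhds 0) := by
  obtain ⟨h, hh, heq⟩ := exists_iteratedDeriv_c0_eq n
  refine (hh.mul InvTrigPoly.inv).tendsto_exp_neg_inv_sq_mul.congr' ?_
  filter_upwards [self_mem_nhdsWithin] with x hx
  rw [heq x hx]
  ring
end
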